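/- arXiv:1404.0608 — 2 statements merged into one kernel-verified Lean document; each statement's English description precedes it below -/
import Mathlib

section
/- Let r > 0 and d > 0 be real with 81d² > 48r². Set Γ = (9d + √(81d² − 48r²))^{1/3} and y₀⁰ = (2/3)·(36r)^{1/3}/Γ + (1/3)·(6/r)^{1/3}·Γ. Then the pair (0, y₀⁰) is the unique real solution (x₀, y₀) of the system r x₀(−4 + x₀² + y₀²) = 0 and 4d − r y₀(−4 + x₀² + y₀²) = 0. -/
private lemma cube_rpow_third {a : ℝ} (ha : 0 ≤ a) : (a ^ ((1 : ℝ) / 3)) ^ 3 = a := by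
  rw [← Real.rpow_natCast (a ^ ((1 : ℝ) / 3)) 3, ← Real.rpow_mul ha]
  norm_num

/-- `(0, y₀⁰)` is the unique real solution of the zero set of
the averaged functions of the forced Van der Pol system. -/
theorem stmt_11 (r d : ℝ) (hr : 0 < r) (hd : 0 < d)
    (hrd : 81 * d ^ 2 > 48 * r ^ 2) :
    let Γ : ℝ := (9 * d + Real.sqrt (81 * d ^ 2 - 48 * r ^ 2)) ^ ((1 : ℝ) / 3)
    let y₀ : ℝ := 2 / 3 * (36 * r) ^ ((1 : ℝ) / 3) / Γ
      + 1 / 3 * (6 / r) ^ ((1 : ℝ) / 3) * Γ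
    ∀ x y : ℝ,
      (r * x * (-4 + x ^ 2 + y ^ 2) = 0 ∧
       4 * d - r * y * (-4 + x ^ 2 + y ^ 2) = 0) ↔ (x = 0 ∧ y = y₀) := by
  intro Γ y₀ x y
  set s : ℝ := Real.sqrt (81 * d ^ 2 - 48 * r ^ 2) with hs_def
  have hs0 : 0 ≤ s := Real.sqrt_nonneg _
  have hs2 : s ^ 2 = 81 * d ^ 2 - 48 * r ^ 2 := by
    rw [hs_def, Real.sq_sqrt (by linarith)]
  have h9ds : 0 < 9 * d + s := by linarith
  set A : ℝ := (36 * r) ^ ((1 : ℝ) / 3) with hA_def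
  set B : ℝ := (6 / r) ^ ((1 : ℝ) / 3) with hB_def
  have hApos : 0 < A := Real.rpow_pos_of_pos (by linarith) _
  have hBpos : 0 < B := Real.rpow_pos_of_pos (by positivity) _
  have hΓpos : 0 < Γ := Real.rpow_pos_of_pos h9ds _
  have hA3 : A ^ 3 = 36 * r := cube_rpow_third (by linarith)
  have hB3 : B ^ 3 = 6 / r := cube_rpow_third (by positivity)
  have hΓ3 : Γ ^ 3 = 9 * d + s := cube_rpow_third h9ds.le
  have hB3r : r * B ^ 3 = 6 := by rw [hB3]; field_simp
  have hAB : A * B = 6 := by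
    have hcube : (A * B) ^ 3 = 216 := by
      have : (A * B) ^ 3 = A ^ 3 * B ^ 3 := by ring
      rw [this, hA3, hB3]; field_simp; ring
    have hfac : (A * B - 6) * ((A * B) ^ 2 + 6 * (A * B) + 36) = 0 := by
      linear_combination hcube
    have hpos : (A * B) ^ 2 + 6 * (A * B) + 36 > 0 := by nlinarith [mul_pos hApos hBpos]
    have := mul_eq_zero.1 hfac
    rcases this with h | h
    · linarith
    · linarith
  have hΓne : Γ ≠ 0 := ne_of_gt hΓpos
  have hy₀def : y₀ = 2 / 3 * A / Γ + 1 / 3 * B * Γ := rfl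
  clear_value s A B Γ y₀
  -- main cubic identity for y₀
  have hmain : r * (2 * A + B * Γ ^ 2) ^ 3 =
      72 * r * A * Γ ^ 2 + 36 * r * B * Γ ^ 4 + 108 * d * Γ ^ 3 := by
    linear_combination (8 * r) * hA3 + (12 * r * Γ ^ 2 * A + 6 * r * Γ ^ 4 * B) * hAB
      + Γ ^ 6 * hB3r + 6 * (Γ ^ 3 + s - 9 * d) * hΓ3 + 6 * hs2
  have hy₀eq : y₀ = (2 * A + B * Γ ^ 2) / (3 * Γ) := by
    rw [hy₀def]; field_simp
  have hy₀cubic : r * y₀ ^ 3 = 4 * r * y₀ + 4 * d := by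
    have e1 : r * y₀ ^ 3 * (27 * Γ ^ 3) = r * (2 * A + B * Γ ^ 2) ^ 3 := by
      rw [hy₀eq]; field_simp; ring
    have e2 : (4 * r * y₀ + 4 * d) * (27 * Γ ^ 3) =
        72 * r * A * Γ ^ 2 + 36 * r * B * Γ ^ 4 + 108 * d * Γ ^ 3 := by
      rw [hy₀eq]; field_simp; ring
    have h27 : (27 : ℝ) * Γ ^ 3 ≠ 0 := by positivity
    exact mul_right_cancel₀ h27 (e1.trans (hmain.trans e2.symm))
  -- y₀² > 16/3
  have h3y₀ : 3 * y₀ ^ 2 > 16 := by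
    by_contra h
    push_neg at h
    have hsq : (r * y₀ * (y₀ ^ 2 - 4)) ^ 2 = (4 * d) ^ 2 := by
      have : r * y₀ * (y₀ ^ 2 - 4) = 4 * d := by linear_combination hy₀cubic
      rw [this]
    have hkey : 0 ≤ r ^ 2 * ((16 - 3 * y₀ ^ 2) * (3 * y₀ ^ 2 - 4) ^ 2) := by
      have h1 : (0:ℝ) ≤ 16 - 3 * y₀ ^ 2 := by linarith
      positivity
    nlinarith [hsq, hkey, sq_nonneg r]
  constructor
  · rintro ⟨h1, h2⟩
    have hx : x = 0 := by
      rcases mul_eq_zero.1 h1 with h | h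
      · rcases mul_eq_zero.1 h with h' | h'
        · exact absurd h' (ne_of_gt hr)
        · exact h'
      · exfalso; rw [h] at h2; simp at h2; linarith
    subst hx
    have hycubic : r * y ^ 3 = 4 * r * y + 4 * d := by linear_combination -h2
    refine ⟨rfl, ?_⟩
    have hdiff : r * (y - y₀) * (y ^ 2 + y * y₀ + y₀ ^ 2 - 4) = 0 := by
      linear_combination hycubic - hy₀cubic
    rcases mul_eq_zero.1 hdiff with h | h
    · rcases mul_eq_zero.1 h with h' | h'
      · exact absurd h' (ne_of_gt hr)
      · linarith
    · exfalso
      have hsq := sq_nonneg (2 * y + y₀)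
      have hh : (2 * y + y₀) ^ 2 = 4 * (y ^ 2 + y * y₀ + y₀ ^ 2 - 4) - 3 * y₀ ^ 2 + 16 := by
        ring
      rw [h] at hh
      linarith
  · rintro ⟨hx, hy⟩
    constructor
    · rw [hx]; ring
    · rw [hx, hy]; linear_combination -hy₀cubic
end

section
/- Fix d > 0. For r > 0 with 81d² > 48r², let y₀⁰(r) = (2/3)·(36r)^{1/3}/Γ + (1/3)·(6/r)^{1/3}·Γ with Γ = (9d + √(81d² − 48r²))^{1/3}, and let J(r) be the Jacobian matrix at the point (0, y₀⁰(r)) of the map (x₀, y₀) ↦ ( −(π/4) r x₀(−4 + x₀² + y₀²), (1/4)(4d − r y₀(−4 + x₀² + y₀²)) ). Then there exists r₀ > 0 such that for all 0 < r < r₀ the matrix J(r) has positive determinant and negative trace; consequently both eigenvalues of J(r) have negative real part. -/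
/-!
The Jacobian at `(0, y₀)` is diagonal, with entries `-(π/4) r (y₀² - 4)` and `r (1 - 3y₀²/4)`,
so both the determinant and trace conditions reduce to `y₀ > 2`. Dropping the first, nonnegative,
summand of `y₀` and bounding `Γ ≥ (9d)^{1/3}` gives `y₀ > (1/3) (54 d / r)^{1/3}`, which exceeds
`2` once `r < d/4`. A real `2 × 2` matrix with positive determinant and negative trace has
eigenvalues with negative real part: a real eigenvalue `μ` satisfies `μ² - tr μ + det = 0`,
which has no solution `μ ≥ 0`, and a non-real pair has real part `tr / 2`.
-/

theorem Matrix.re_lt_zero_of_mem_spectrum_of_det_pos_of_trace_neg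
    {A : Matrix (Fin 2) (Fin 2) ℝ} (hdet : 0 < A.det) (htr : A.trace < 0) {μ : ℂ}
    (hμ : μ ∈ spectrum ℂ (A.map ((↑) : ℝ → ℂ))) : μ.re < 0 := by
  rw [spectrum.mem_iff, Matrix.isUnit_iff_isUnit_det, isUnit_iff_ne_zero, not_not,
    Matrix.det_fin_two] at hμ
  rw [Matrix.det_fin_two] at hdet
  rw [Matrix.trace_fin_two] at htr
  simp only [Fin.isValue, Matrix.sub_apply, Matrix.algebraMap_matrix_apply, ↓reduceIte,
    Algebra.algebraMap_self, RingHom.id_apply, Matrix.map_apply, zero_ne_one, zero_sub, one_ne_zero,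
    mul_neg, neg_mul, neg_neg, Complex.ext_iff, Complex.sub_re, Complex.mul_re, Complex.ofReal_re,
    Complex.sub_im, Complex.ofReal_im, sub_zero, mul_zero, Complex.zero_re, Complex.mul_im, zero_mul,
    add_zero, Complex.zero_im] at hμ
  obtain ⟨hre, him⟩ := hμ
  rcases mul_eq_zero.mp (show μ.im * (2 * μ.re - (A 0 0 + A 1 1)) = 0 by linarith)
    with hreal | hhalf_trace
  · rw [hreal] at hre
    by_contra! hnonneg
    nlinarith [mul_nonneg hnonneg hnonneg, mul_nonneg hnonneg (neg_nonneg.mpr htr.le)]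
  · linarith

lemma six_lt_rpow_one_third {x : ℝ} (hx : 216 < x) : 6 < x ^ ((1 : ℝ) / 3) := by
  rw [one_div, Real.lt_rpow_inv_iff_of_pos (by norm_num) (by linarith) (by norm_num)]
  norm_num [hx]

-- `y₀` is Cardano's formula for the root of `r y³ - 4 r y = 4 d`, with `s = √(81 d² - 48 r²)`.
lemma two_lt_cardano_root {r d s : ℝ} (hr : 0 < r) (hrd : 4 * r < d) (hs : 0 ≤ s) :
    2 < 2 / 3 * (36 * r) ^ ((1 : ℝ) / 3) / (9 * d + s) ^ ((1 : ℝ) / 3)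
      + 1 / 3 * (6 / r) ^ ((1 : ℝ) / 3) * (9 * d + s) ^ ((1 : ℝ) / 3) := by
  have hd : 0 < d := by linarith
  have hfirst : 0 ≤ 2 / 3 * (36 * r) ^ ((1 : ℝ) / 3) / (9 * d + s) ^ ((1 : ℝ) / 3) := by
    positivity
  have hsecond : 6 < (6 / r) ^ ((1 : ℝ) / 3) * (9 * d + s) ^ ((1 : ℝ) / 3) := by
    rw [← Real.mul_rpow (by positivity) (by positivity)]
    apply six_lt_rpow_one_third
    rw [div_mul_eq_mul_div, lt_div_iff₀ hr]
    nlinarith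
  linarith

/-- for small `r > 0` the Jacobian matrix of the averaged map
of the forced Van der Pol system at `(0, y₀⁰(r))` has positive determinant and
negative trace, hence both of its (complex) eigenvalues have negative real
part. -/
theorem stmt_19 (d : ℝ) (hd : 0 < d) :
    ∃ r₀ > (0 : ℝ), ∀ r : ℝ, 0 < r → r < r₀ → 81 * d ^ 2 > 48 * r ^ 2 →
      let Γ : ℝ := (9 * d + Real.sqrt (81 * d ^ 2 - 48 * r ^ 2)) ^ ((1 : ℝ) / 3)
      let y₀ : ℝ := 2 / 3 * (36 * r) ^ ((1 : ℝ) / 3) / Γ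
        + 1 / 3 * (6 / r) ^ ((1 : ℝ) / 3) * Γ
      let f₁ : ℝ → ℝ → ℝ := fun x y => -(Real.pi / 4) * r * x * (-4 + x ^ 2 + y ^ 2)
      let f₂ : ℝ → ℝ → ℝ := fun x y => 1 / 4 * (4 * d - r * y * (-4 + x ^ 2 + y ^ 2))
      let J : Matrix (Fin 2) (Fin 2) ℝ :=
        !![deriv (fun x => f₁ x y₀) 0, deriv (fun y => f₁ 0 y) y₀;
           deriv (fun x => f₂ x y₀) 0, deriv (fun y => f₂ 0 y) y₀]
      0 < J.det ∧ Matrix.trace J < 0 ∧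
        ∀ μ ∈ spectrum ℂ (J.map (fun x : ℝ => (x : ℂ))), μ.re < 0 := by
  refine ⟨d / 4, by positivity, ?_⟩
  intro r hr hrd _ Γ y₀ f₁ f₂ J
  have hy₀ : 2 < y₀ := two_lt_cardano_root hr (by linarith) (Real.sqrt_nonneg _)
  clear_value y₀
  have hJ : J = !![-(Real.pi / 4) * r * (-4 + y₀ ^ 2), 0; 0, r - 3 / 4 * r * y₀ ^ 2] := by
    ext i j
    fin_cases i <;> fin_cases j <;> simp (disch := fun_prop) [J, f₁, f₂]
    ring
  have hentry₀₀ : -(Real.pi / 4) * r * (-4 + y₀ ^ 2) < 0 := by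
    have : 0 < Real.pi / 4 * r * (-4 + y₀ ^ 2) :=
      mul_pos (by positivity) (by nlinarith)
    linarith
  have hentry₁₁ : r - 3 / 4 * r * y₀ ^ 2 < 0 := by
    nlinarith [mul_pos hr (show 0 < 3 / 4 * y₀ ^ 2 - 1 by nlinarith)]
  have hdet : 0 < J.det := by
    rw [hJ, Matrix.det_fin_two_of, mul_zero, sub_zero]
    exact mul_pos_of_neg_of_neg hentry₀₀ hentry₁₁
  have htr : J.trace < 0 := by
    rw [hJ, Matrix.trace_fin_two_of]
    linarith
  exact ⟨hdet, htr, fun _ => Matrix.re_lt_zero_of_mem_spectrum_of_det_pos_of_trace_neg hdet htr⟩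
end
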